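/- arXiv:1801.08056 — 3 statements merged into one kernel-verified Lean document; each statement's English description precedes it below -/
import Mathlib

section
/- Let D be the derivation of ℚ[x,y,z] with D(x)=xyz, D(y)=yz², D(z)=y²z. For every n ≥ 0, D^n(xy) = xy · Σ_{π ∈ B_n} y^{fdes(π)} z^{2n − fdes(π)}, an identity in ℚ[x,y,z]. -/
/-- Signed permutations (the hyperoctahedral group `B_n`), encoded as a pair of a
permutation of `Fin n` and a sign vector; the one-line word is recovered by `bval`. -/
abbrev SignedPerm (n : ℕ) := Equiv.Perm (Fin n) × (Fin n → Bool)

/-- The value `π(i) ∈ ±[n]` of the signed permutation at position `i ∈ {1,…,n}`,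
with the convention `π(0) = 0` (and value `0` outside the range). -/
def bval {n : ℕ} (π : SignedPerm n) (i : ℕ) : ℤ :=
  if h : 1 ≤ i ∧ i ≤ n then
    (if π.2 ⟨i - 1, by omega⟩ then -(((π.1 ⟨i - 1, by omega⟩ : ℕ) : ℤ) + 1)
      else ((π.1 ⟨i - 1, by omega⟩ : ℕ) : ℤ) + 1)
  else 0

/-- The type-A descent number of a signed permutation:
`#{i ∈ [n-1] : π(i) > π(i+1)}`. -/
def desA {n : ℕ} (π : SignedPerm n) : ℕ :=
  ((Finset.Icc 1 (n - 1)).filter (fun i => bval π (i+1) < bval π i)).card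

/-- The type-B descent number of a signed permutation:
`#{i ∈ {0,1,…,n-1} : π(i) > π(i+1)}` with `π(0) = 0`. -/
def desB {n : ℕ} (π : SignedPerm n) : ℕ :=
  ((Finset.range n).filter (fun i => bval π (i+1) < bval π i)).card

/-- The flag descent number: `2·des_A(π)+1` if `π(1) < 0`, and `2·des_A(π)` otherwise. -/
def fdes {n : ℕ} (π : SignedPerm n) : ℕ :=
  if bval π 1 < 0 then 2 * desA π + 1 else 2 * desA π

/-!
Both sides satisfy the same recurrence in `n`. On the left, `D (x y · y^g z^e)` equals
`x y · (y^(g+1) z^(e+1) + (g+1) y^g z^(e+2) + e y^(g+2) z^e)`. On the right, every element of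
`B_(n+1)` arises exactly once by inserting `n + 1` or `-(n + 1)` into the word of some `π ∈ B_n`
at one of its `n + 1` positions. Inserting a new maximum keeps the number of descents at the
positions following a descent and at the end, and raises it by one elsewhere; a new minimum
behaves in the same way with the start in place of the end. Tracking the sign of the first letter,
the `2n + 2` insertions into `π` with `fdes π = f` have flag descent numbers `f + 1` once, `f`
exactly `f + 1` times and `f + 2` exactly `2n - f` times, matching the three terms above.
-/

open scoped Finset

namespace List

variable {α : Type*} [LinearOrder α]

def headDescent (a : α) : List α → ℕ
  | [] => 0
  | b :: _ => if b < a then 1 else 0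

def descents : List α → ℕ
  | [] => 0
  | a :: t => headDescent a t + descents t

@[simp] lemma descents_nil : descents ([] : List α) = 0 := rfl

@[simp] lemma descents_cons (a : α) (t : List α) :
    descents (a :: t) = headDescent a t + descents t := rfl

@[simp] lemma headDescent_nil (a : α) : headDescent a [] = 0 := rfl

@[simp] lemma headDescent_cons (a b : α) (t : List α) :
    headDescent a (b :: t) = if b < a then 1 else 0 := rfl

lemma headDescent_le_one (a : α) (t : List α) : headDescent a t ≤ 1 := by
  cases t with
  | nil => exact zero_le_one
  | cons b t => rw [headDescent_cons]; split <;> omega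

lemma headDescent_insertIdx_succ (a v : α) (k : ℕ) (t : List α) :
    headDescent a (t.insertIdx (k + 1) v) = headDescent a t := by
  cases t <;> simp [insertIdx_succ_nil, insertIdx_succ_cons]

variable {A : Type*} [AddCommGroup A]

lemma sum_range_descents_insertIdx_cons (F : ℕ → A) (v a : α) (t : List α) :
    ∑ k ∈ Finset.range ((a :: t).length + 1), F (descents ((a :: t).insertIdx k v)) =
      F (descents (v :: a :: t)) + F (descents (a :: v :: t)) +
        ∑ k ∈ Finset.range t.length,
          F (headDescent a t + descents (t.insertIdx (k + 1) v)) := by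
  simp only [length_cons, Finset.sum_range_succ', insertIdx_succ_cons, insertIdx_zero]
  simp only [descents_cons (a := a), headDescent_insertIdx_succ]
  abel

/-- The sum over an arbitrary `F` records a multiset of descent numbers: of the `m + 1` insertions
of a new maximum into a list with `m` entries and `d` descents, `d + 1` have `d` descents and
`m - d` have `d + 1`. -/
lemma sum_range_descents_insertIdx_of_forall_lt (F : ℕ → A) (v : α) :
    ∀ l : List α, (∀ a ∈ l, a < v) →
      ∑ k ∈ Finset.range (l.length + 1), F (descents (l.insertIdx k v)) =
        ((descents l : ℤ) + 1) • F (descents l) +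
          ((l.length : ℤ) - descents l) • F (descents l + 1)
  | [], _ => by simp
  | a :: t, hl => by
    have hav : a < v := hl a mem_cons_self
    have ih := sum_range_descents_insertIdx_of_forall_lt
      (fun d => F (headDescent a t + d)) v t (fun b hb => hl b (mem_cons_of_mem a hb))
    rw [Finset.sum_range_succ', insertIdx_zero] at ih
    rw [sum_range_descents_insertIdx_cons, eq_sub_of_add_eq ih]
    rcases t with _ | ⟨b, t⟩
    · simp [hav, not_lt.2 hav.le, add_comm]
    · have hbv : b < v := hl b (by simp)
      have h1 : descents (v :: a :: b :: t) = 1 + descents (a :: b :: t) := by simp [hav]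
      have h2 : descents (a :: v :: b :: t) = 1 + descents (b :: t) := by
        simp [hbv, not_lt.2 hav.le]
      have h3 : descents (v :: b :: t) = 1 + descents (b :: t) := by simp [hbv]
      rw [h1, h2, h3]
      simp only [descents_cons a, length_cons]
      have hle := headDescent_le_one a (b :: t)
      generalize headDescent a (b :: t) = h at *
      interval_cases h <;> push_cast <;> ring_nf <;> module

lemma sum_range_descents_insertIdx_of_forall_gt (F : ℕ → A) (v : α) :
    ∀ l : List α, (∀ a ∈ l, v < a) →
      ∑ k ∈ Finset.range (l.length + 1), F (descents (l.insertIdx k v)) =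
        ((descents l : ℤ) + 1) • F (descents l) +
          ((l.length : ℤ) - descents l) • F (descents l + 1)
  | [], _ => by simp
  | a :: t, hl => by
    have hva : v < a := hl a mem_cons_self
    have ih := sum_range_descents_insertIdx_of_forall_gt
      (fun d => F (headDescent a t + d)) v t (fun b hb => hl b (mem_cons_of_mem a hb))
    rw [Finset.sum_range_succ', insertIdx_zero] at ih
    rw [sum_range_descents_insertIdx_cons, eq_sub_of_add_eq ih]
    have hvt : ∀ s, (∀ b ∈ s, v < b) → headDescent v s = 0 := by
      rintro (_ | ⟨b, s⟩) hs
      · rfl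
      · simp [not_lt.2 (hs b mem_cons_self).le]
    have h1 : descents (v :: a :: t) = descents (a :: t) := by simp [hvt (a :: t) hl]
    have h2 : descents (a :: v :: t) = 1 + descents t := by
      simp [hva, hvt t fun b hb => hl b (mem_cons_of_mem a hb)]
    have h3 : descents (v :: t) = descents t := by
      simp [hvt t fun b hb => hl b (mem_cons_of_mem a hb)]
    rw [h1, h2, h3]
    simp only [descents_cons a, length_cons]
    have hle := headDescent_le_one a t
    generalize headDescent a t = h at *
    interval_cases h <;> push_cast <;> ring_nf <;> module

/-- `headDescent 0 l` is the descent at position `0` under the convention `π(0) = 0`. -/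
def flagDescents (l : List ℤ) : ℕ := 2 * descents l + headDescent 0 l

lemma flagDescents_insertIdx_succ (v : ℤ) (k : ℕ) (l : List ℤ) :
    flagDescents (l.insertIdx (k + 1) v) =
      2 * descents (l.insertIdx (k + 1) v) + headDescent 0 l := by
  rw [flagDescents, headDescent_insertIdx_succ]

lemma sum_range_flagDescents_insertIdx (F : ℕ → A) {M : ℤ} (hM : 0 < M) (l : List ℤ)
    (hl : ∀ a ∈ l, -M < a ∧ a < M) :
    ∑ k ∈ Finset.range (l.length + 1),
        (F (flagDescents (l.insertIdx k (-M))) + F (flagDescents (l.insertIdx k M))) =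
      F (flagDescents l + 1) + ((flagDescents l : ℤ) + 1) • F (flagDescents l) +
        (2 * (l.length : ℤ) - flagDescents l) • F (flagDescents l + 2) := by
  set c := headDescent 0 l with hc
  have hmax := sum_range_descents_insertIdx_of_forall_lt (fun d => F (2 * d + c)) M l
    fun a ha => (hl a ha).2
  have hmin := sum_range_descents_insertIdx_of_forall_gt (fun d => F (2 * d + c)) (-M) l
    fun a ha => (hl a ha).1
  rw [Finset.sum_range_succ'] at hmax hmin ⊢
  simp only [flagDescents_insertIdx_succ, Finset.sum_add_distrib]
  rw [eq_sub_of_add_eq hmin, eq_sub_of_add_eq hmax]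
  simp only [insertIdx_zero, flagDescents, ← hc]
  rcases l with _ | ⟨a, t⟩
  · simp [c, hM, not_lt.2 hM.le, add_comm]
  · have ha := hl a mem_cons_self
    have e1 : descents (M :: a :: t) = descents (a :: t) + 1 := by
      rw [descents_cons, headDescent_cons, if_pos ha.2]; omega
    have e2 : descents (-M :: a :: t) = descents (a :: t) := by
      rw [descents_cons, headDescent_cons, if_neg (not_lt.2 ha.1.le), zero_add]
    have e3 : headDescent 0 (M :: a :: t) = 0 := by simp [not_lt.2 hM.le]
    have e4 : headDescent 0 (-M :: a :: t) = 1 := by simp [hM]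
    rw [e1, e2, e3, e4]
    have hle : c ≤ 1 := headDescent_le_one 0 (a :: t)
    generalize c = c at *
    interval_cases c <;> push_cast <;> ring_nf <;> module

theorem ofFn_insertNth {α : Type*} {n : ℕ} (p : Fin (n + 1)) (x : α) (f : Fin n → α) :
    ofFn (Fin.insertNth p x f) = (ofFn f).insertIdx p x := by
  induction n with
  | zero => rw [Fin.fin_one_eq_zero p]; simp
  | succ m ih =>
    cases p using Fin.cases with
    | zero => simp
    | succ i =>
      rw [← Fin.cons_self_tail f, Fin.insertNth_succ_cons, ofFn_cons, ofFn_cons, ih]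
      rfl

lemma descents_ofFn {α : Type*} [LinearOrder α] (g : ℕ → α) : ∀ n : ℕ,
    descents (ofFn fun i : Fin n => g i) = #{i ∈ Finset.range (n - 1) | g (i + 1) < g i}
  | 0 => by simp
  | n + 1 => by
    have ih := descents_ofFn (fun i => g (i + 1)) n
    simp only [ofFn_succ, Fin.val_zero, Fin.val_succ, descents_cons, ih, Finset.card_filter]
    cases n with
    | zero => simp
    | succ n => simp [Finset.sum_range_succ' _ n, ofFn_succ, add_comm]

end List

namespace SignedPerm

variable {n : ℕ}

def word (π : SignedPerm n) : List ℤ := List.ofFn fun i : Fin n => bval π (i + 1)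

lemma bval_eq_zero {π : SignedPerm n} {i : ℕ} (h : ¬(1 ≤ i ∧ i ≤ n)) : bval π i = 0 := by
  rw [bval, dif_neg h]

lemma bval_succ (π : SignedPerm n) (i : Fin n) :
    bval π (i + 1) = if π.2 i then -((π.1 i : ℤ) + 1) else (π.1 i : ℤ) + 1 := by
  rw [bval, dif_pos (by omega)]
  simp

lemma desA_eq_descents (π : SignedPerm n) : desA π = (word π).descents := by
  rw [word, List.descents_ofFn (fun i => bval π (i + 1)), desA, Finset.card_filter,
    Finset.card_filter, ← Finset.Ico_add_one_right_eq_Icc, Finset.sum_Ico_eq_sum_range]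
  rcases n with _ | n
  · rfl
  · simp only [Nat.add_sub_cancel, add_comm 1]

lemma fdes_eq_flagDescents (π : SignedPerm n) : fdes π = (word π).flagDescents := by
  have hhead : List.headDescent 0 (word π) = if bval π 1 < 0 then 1 else 0 := by
    rcases n with _ | n
    · simp [word, bval_eq_zero]
    · simp [word, List.ofFn_succ]
  rw [fdes, List.flagDescents, ← desA_eq_descents, hhead]
  split <;> rfl

lemma abs_lt_of_mem_word {π : SignedPerm n} {a : ℤ} (ha : a ∈ word π) :
    -((n : ℤ) + 1) < a ∧ a < n + 1 := by
  obtain ⟨i, rfl⟩ := List.mem_ofFn.1 ha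
  have := (π.1 i).isLt
  rw [bval_succ]
  split <;> omega

lemma fdes_le (π : SignedPerm n) : fdes π ≤ 2 * n := by
  have hdesA : desA π ≤ n - 1 :=
    (Finset.card_filter_le _ _).trans (by simp)
  rcases n with _ | n
  · simp [fdes, bval_eq_zero, Nat.le_zero.1 hdesA]
  · rw [fdes]; split <;> omega

/-- Insert the entry `n + 1`, negated if `s`, at position `p`. -/
def insertMax (π : SignedPerm n) (p : Fin (n + 1)) (s : Bool) : SignedPerm (n + 1) :=
  ((finSuccEquiv' p).trans ((Equiv.optionCongr π.1).trans (finSuccEquiv' (Fin.last n)).symm),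
    Fin.insertNth p s π.2)

@[simp] lemma insertMax_fst_self (π : SignedPerm n) (p : Fin (n + 1)) (s : Bool) :
    (π.insertMax p s).1 p = Fin.last n := by
  simp [insertMax, finSuccEquiv'_symm_none]

@[simp] lemma insertMax_fst_succAbove (π : SignedPerm n) (p : Fin (n + 1)) (s : Bool)
    (j : Fin n) : (π.insertMax p s).1 (p.succAbove j) = (π.1 j).castSucc := by
  simp [insertMax, finSuccEquiv'_symm_some, Fin.succAbove_last]

@[simp] lemma insertMax_snd (π : SignedPerm n) (p : Fin (n + 1)) (s : Bool) :
    (π.insertMax p s).2 = Fin.insertNth p s π.2 := rfl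

lemma word_insertMax (π : SignedPerm n) (p : Fin (n + 1)) (s : Bool) :
    word (π.insertMax p s) = (word π).insertIdx p (if s then -((n : ℤ) + 1) else n + 1) := by
  rw [word, word, ← List.ofFn_insertNth]
  congr 1
  refine (Fin.insertNth_eq_iff.2 ⟨?_, ?_⟩).symm
  · simp [bval_succ]
  · funext j
    simp [Fin.removeNth, bval_succ]

lemma insertMax_injective : Function.Injective
    fun x : SignedPerm n × Fin (n + 1) × Bool => x.1.insertMax x.2.1 x.2.2 := by
  rintro ⟨π, p, s⟩ ⟨π', p', s'⟩ h
  simp only at h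
  obtain rfl : p = p' := (π'.insertMax p' s').1.injective <| by
    rw [← h, insertMax_fst_self, h, insertMax_fst_self]
  have hσ : π.1 = π'.1 := Equiv.ext fun j => Fin.castSucc_injective n <| by
    rw [← insertMax_fst_succAbove π p s, h, insertMax_fst_succAbove]
  obtain ⟨rfl, hε⟩ := Fin.insertNth_injective2 (α := fun _ => Bool) (congrArg Prod.snd h)
  rw [Prod.ext hσ hε]

lemma insertMax_bijective : Function.Bijective
    fun x : SignedPerm n × Fin (n + 1) × Bool => x.1.insertMax x.2.1 x.2.2 := by
  refine (Fintype.bijective_iff_injective_and_card _).2 ⟨insertMax_injective, ?_⟩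
  simp only [Fintype.card_prod, Fintype.card_perm, Fintype.card_fun, Fintype.card_fin,
    Fintype.card_bool, Nat.factorial_succ]
  ring

theorem sum_fdes_succ {A : Type*} [AddCommGroup A] (F : ℕ → A) (n : ℕ) :
    ∑ π : SignedPerm (n + 1), F (fdes π) =
      ∑ π : SignedPerm n, (F (fdes π + 1) + ((fdes π : ℤ) + 1) • F (fdes π) +
        (2 * (n : ℤ) - fdes π) • F (fdes π + 2)) := by
  rw [← insertMax_bijective.sum_comp, Fintype.sum_prod_type]
  refine Finset.sum_congr rfl fun π _ => ?_
  have hword : (word π).length = n := List.length_ofFn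
  simp only [Fintype.sum_prod_type, Fintype.sum_bool, fdes_eq_flagDescents, word_insertMax,
    if_true, Bool.false_eq_true, if_false]
  have h := List.sum_range_flagDescents_insertIdx F (by positivity) (word π)
    fun a ha => abs_lt_of_mem_word ha
  rw [hword] at h
  rw [← h, Finset.sum_range]

end SignedPerm

lemma Derivation.map_pow_of_map_eq_mul {R A : Type*} [CommSemiring R] [CommSemiring A]
    [Algebra R A] (D : Derivation R A A) {a b : A} (h : D a = a * b) (k : ℕ) :
    D (a ^ k) = k • (a ^ k * b) := by
  rw [Derivation.leibniz_pow, h, smul_eq_mul]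
  rcases k with _ | k
  · simp
  · rw [Nat.add_sub_cancel, pow_succ]; ring

section

open MvPolynomial

variable (D : Derivation ℚ (MvPolynomial (Fin 3) ℚ) (MvPolynomial (Fin 3) ℚ))
  (hx : D (X 0) = X 0 * X 1 * X 2) (hy : D (X 1) = X 1 * X 2 ^ 2) (hz : D (X 2) = X 1 ^ 2 * X 2)
include hx hy hz

lemma map_X0_mul_X1_mul_monomial (g e : ℕ) :
    D (X 0 * X 1 * (X 1 ^ g * X 2 ^ e)) =
      X 0 * X 1 * (X 1 ^ (g + 1) * X 2 ^ (e + 1) + ((g : ℤ) + 1) • (X 1 ^ g * X 2 ^ (e + 2)) +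
        (e : ℤ) • (X 1 ^ (g + 2) * X 2 ^ e)) := by
  have hy' : D (X 1 ^ (g + 1)) = (g + 1) • (X 1 ^ (g + 1) * X 2 ^ 2) :=
    D.map_pow_of_map_eq_mul hy _
  have hz' : D (X 2 ^ e) = e • (X 2 ^ e * X 1 ^ 2) :=
    D.map_pow_of_map_eq_mul (hz.trans (mul_comm _ _)) _
  rw [show (X 0 * X 1 * (X 1 ^ g * X 2 ^ e) : MvPolynomial (Fin 3) ℚ) =
      X 0 * X 1 ^ (g + 1) * X 2 ^ e by ring,
    Derivation.leibniz, Derivation.leibniz, hx, hy', hz']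
  simp only [smul_eq_mul, nsmul_eq_mul, zsmul_eq_mul]
  push_cast
  ring

end

open MvPolynomial in
theorem statement_0
    (D : Derivation ℚ (MvPolynomial (Fin 3) ℚ) (MvPolynomial (Fin 3) ℚ))
    (hx : D (X 0) = X 0 * X 1 * X 2)
    (hy : D (X 1) = X 1 * X 2 ^ 2)
    (hz : D (X 2) = X 1 ^ 2 * X 2) (n : ℕ) :
    (D.toLinearMap ^ n) (X 0 * X 1) =
      X 0 * X 1 * ∑ π : SignedPerm n, X 1 ^ fdes π * X 2 ^ (2 * n - fdes π) := by
  induction n with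
  | zero =>
    have h0 (π : SignedPerm 0) : fdes π = 0 := Nat.le_zero.1 (SignedPerm.fdes_le π)
    simp [h0]
  | succ n ih =>
    rw [pow_succ', Module.End.mul_apply, ih,
      SignedPerm.sum_fdes_succ (fun f => X 1 ^ f * X 2 ^ (2 * (n + 1) - f)), Finset.mul_sum,
      Finset.mul_sum, Derivation.coeFn_coe, map_sum]
    refine Finset.sum_congr rfl fun π _ => ?_
    obtain ⟨e, he⟩ := Nat.exists_eq_add_of_le (SignedPerm.fdes_le π)
    rw [show 2 * n - fdes π = e by omega, map_X0_mul_X1_mul_monomial D hx hy hz,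
      show 2 * (n : ℤ) - fdes π = e by omega, show 2 * (n + 1) - (fdes π + 1) = e + 1 by omega,
      show 2 * (n + 1) - fdes π = e + 2 by omega, show 2 * (n + 1) - (fdes π + 2) = e by omega]
end

section
/- Let D be the derivation of ℚ[x,y,z] with D(x)=xyz, D(y)=yz², D(z)=y²z. For every n ≥ 0, D^n(y²) = y² · Σ_{π ∈ B_n} y^{2·des_A(π)} z^{2n − 2·des_A(π)}, an identity in ℚ[x,y,z]. -/
/-!
Inserting the letter `±(n + 1)` into one of the `n + 1` gaps of a signed permutation of `[n]`
produces every signed permutation of `[n + 1]` exactly once. Inserting `n + 1` keeps `des_A`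
iff it goes to the end or into a descent, inserting `-(n + 1)` iff it goes to the front or into
a descent; so of the `2n + 2` insertions into `π` with `des_A π = d`, `2d + 2` keep `d` and
`2n - 2d` raise it to `d + 1`. On the other side
`D (y^(2d+2) z^(2n-2d)) = (2d+2) y^(2d+2) z^(2n-2d+2) + (2n-2d) y^(2d+4) z^(2n-2d)`,
which is the same recurrence, and the identity follows by induction on `n`.
-/

def wordDes (w : ℕ → ℤ) (m : ℕ) : ℕ :=
  ((Finset.Icc 1 (m - 1)).filter (fun i => w (i + 1) < w i)).card

lemma wordDes_succ (w : ℕ → ℤ) (m : ℕ) :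
    wordDes w (m + 1) = wordDes w m + if 1 ≤ m ∧ w (m + 1) < w m then 1 else 0 := by
  rcases m with _ | m
  · simp [wordDes]
  · simp only [wordDes, Nat.add_sub_cancel,
      ← Finset.insert_Icc_right_eq_Icc_add_one (by omega : 1 ≤ m + 1), Finset.filter_insert]
    split_ifs with h <;> simp_all

lemma wordDes_congr {w w' : ℕ → ℤ} {m : ℕ} (h : ∀ i, 1 ≤ i → i ≤ m → w i = w' i) :
    wordDes w m = wordDes w' m := by
  unfold wordDes
  congr 1
  refine Finset.filter_congr fun i hi => ?_
  rw [Finset.mem_Icc] at hi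
  rw [h i hi.1 (by omega), h (i + 1) (by omega) (by omega)]

-- The letter `v` becomes the `(a + 1)`-st letter of the new word.
def insertAt (w : ℕ → ℤ) (a : ℕ) (v : ℤ) (i : ℕ) : ℤ :=
  if i ≤ a then w i else if i = a + 1 then v else w (i - 1)

/-- The adjacent pair `(w a, w (a + 1))` is replaced by the two pairs `(w a, v)` and
`(v, w (a + 1))`; a pair starting at position `0` is never counted. -/
lemma wordDes_insertAt (w : ℕ → ℤ) (v : ℤ) {a m : ℕ} (ham : a ≤ m) :
    wordDes (insertAt w a v) (m + 1) + (if 1 ≤ a ∧ a < m ∧ w (a + 1) < w a then 1 else 0) =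
      wordDes w m + (if 1 ≤ a ∧ v < w a then 1 else 0) +
        (if a < m ∧ w (a + 1) < v then 1 else 0) := by
  induction m, ham using Nat.le_induction with
  | base =>
    have hprefix : wordDes (insertAt w a v) a = wordDes w a :=
      wordDes_congr fun i _ hi => if_pos hi
    simp [wordDes_succ, hprefix, insertAt]
  | succ m ham ih =>
    rw [wordDes_succ, wordDes_succ w]
    simp only [insertAt, if_neg (show ¬ m + 1 + 1 ≤ a by omega),
      if_neg (show m + 1 + 1 ≠ a + 1 by omega), Nat.add_sub_cancel] at ih ⊢
    rcases ham.lt_or_eq with ham | rfl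
    · simp only [if_neg (show ¬ m + 1 ≤ a by omega), if_neg (show m + 1 ≠ a + 1 by omega)]
      split_ifs at ih ⊢ <;> omega
    · simp only [lt_irrefl, lt_add_one, false_and, and_false, if_false, if_true, add_zero,
        le_add_iff_nonneg_left, zero_le, true_and] at ih ⊢
      split_ifs at ih ⊢ <;> omega

lemma sum_comp_of_le_le_add_one {ι M : Type*} [Fintype ι] [AddCommMonoid M] (F : ℕ → M)
    (g : ι → ℕ) {d : ℕ} (hg : ∀ x, d ≤ g x ∧ g x ≤ d + 1) :
    ∑ x, F (g x) = (Fintype.card ι * (d + 1) - ∑ x, g x) • F d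
      + (∑ x, g x - Fintype.card ι * d) • F (d + 1) := by
  classical
  have hF : ∀ x, F (g x) = if g x = d + 1 then F (d + 1) else F d := by
    intro x
    split_ifs with h
    · rw [h]
    · rw [show g x = d by have := hg x; omega]
  have hg' : ∀ x, g x = d + if g x = d + 1 then 1 else 0 := by
    intro x
    have := hg x
    split_ifs <;> omega
  have hcount : ∑ x, g x = Fintype.card ι * d + (Finset.univ.filter fun x => g x = d + 1).card := by
    rw [Fintype.sum_congr _ _ hg', Finset.sum_add_distrib, Finset.sum_boole]
    simp [mul_comm]
  have hcompl := Finset.card_filter_add_card_filter_not (s := Finset.univ) (fun x => g x = d + 1)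
  rw [Finset.card_univ] at hcompl
  rw [Fintype.sum_congr _ _ hF, Finset.sum_ite, Finset.sum_const, Finset.sum_const, add_comm,
    hcount, mul_add_one]
  congr 2 <;> omega

section Insertion

variable {n : ℕ}

def sval (π : SignedPerm n) (j : Fin n) : ℤ :=
  if π.2 j then -(((π.1 j : ℕ) : ℤ) + 1) else ((π.1 j : ℕ) : ℤ) + 1

lemma bval_val_add_one (π : SignedPerm n) (j : Fin n) : bval π (j + 1) = sval π j := by
  simp [bval, sval]

lemma bval_eq_zero (π : SignedPerm n) {i : ℕ} (hi : i = 0 ∨ n < i) : bval π i = 0 := by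
  unfold bval
  rw [dif_neg (by omega)]

lemma abs_bval_le (π : SignedPerm n) (i : ℕ) : |bval π i| ≤ n := by
  unfold bval
  split_ifs <;> simp [abs_le] <;> omega

lemma desA_le (π : SignedPerm n) : desA π ≤ n - 1 :=
  (Finset.card_filter_le _ _).trans (by simp)

def topLetter (n : ℕ) (s : Bool) : ℤ :=
  if s then -((n : ℤ) + 1) else (n : ℤ) + 1

-- Inserts the letter `topLetter n s = ±(n + 1)` into position `p` (counted from `0`).
def insertMax (π : SignedPerm n) (p : Fin (n + 1)) (s : Bool) : SignedPerm (n + 1) :=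
  ((finSuccEquiv' p).trans ((Equiv.optionCongr π.1).trans finSuccEquivLast.symm),
    Fin.insertNth p s π.2)

lemma insertMax_fst_self (π : SignedPerm n) (p : Fin (n + 1)) (s : Bool) :
    (insertMax π p s).1 p = Fin.last n := by
  simp [insertMax]

lemma insertMax_fst_succAbove (π : SignedPerm n) (p : Fin (n + 1)) (s : Bool) (j : Fin n) :
    (insertMax π p s).1 (p.succAbove j) = (π.1 j).castSucc := by
  simp [insertMax, finSuccEquivLast_symm_some]

lemma sval_insertMax_self (π : SignedPerm n) (p : Fin (n + 1)) (s : Bool) :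
    sval (insertMax π p s) p = topLetter n s := by
  simp [sval, topLetter, insertMax]

lemma sval_insertMax_succAbove (π : SignedPerm n) (p : Fin (n + 1)) (s : Bool) (j : Fin n) :
    sval (insertMax π p s) (p.succAbove j) = sval π j := by
  simp [sval, insertMax]

lemma bval_insertMax (π : SignedPerm n) (p : Fin (n + 1)) (s : Bool) :
    bval (insertMax π p s) = insertAt (bval π) p (topLetter n s) := by
  funext i
  obtain rfl | hi | ⟨j, rfl⟩ : i = 0 ∨ n + 1 < i ∨ ∃ j : Fin (n + 1), i = j + 1 := by
    rcases i with _ | i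
    · exact Or.inl rfl
    · exact Or.inr ((lt_or_ge (n + 1) (i + 1)).imp_right fun h => ⟨⟨i, by omega⟩, rfl⟩)
  · simp [bval_eq_zero, insertAt]
  · rw [bval_eq_zero _ (Or.inr hi), insertAt, if_neg (by omega), if_neg (by omega),
      bval_eq_zero _ (Or.inr (by omega))]
  rw [bval_val_add_one]
  rcases p.eq_self_or_eq_succAbove j with rfl | ⟨k, rfl⟩
  · simp [sval_insertMax_self, insertAt]
  rw [sval_insertMax_succAbove, ← bval_val_add_one, insertAt]
  rcases lt_or_ge k.castSucc p with hk | hk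
  · rw [Fin.succAbove_of_castSucc_lt _ _ hk, if_pos (by simpa [Fin.lt_def] using hk)]
    rfl
  · rw [Fin.succAbove_of_le_castSucc _ _ hk, if_neg (by simp [Fin.le_def] at hk ⊢; omega),
      if_neg (by simp [Fin.le_def] at hk ⊢; omega)]
    rfl

lemma insertMax_injective :
    Function.Injective fun x : SignedPerm n × Fin (n + 1) × Bool => insertMax x.1 x.2.1 x.2.2 := by
  rintro ⟨π, p, s⟩ ⟨π', p', s'⟩ h
  simp only at h
  obtain rfl : p = p' := by
    by_contra hne
    obtain ⟨j, rfl⟩ := Fin.exists_succAbove_eq hne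
    have := insertMax_fst_self π (p'.succAbove j) s
    rw [h, insertMax_fst_succAbove] at this
    exact Fin.castSucc_ne_last _ this
  have hsnd : Fin.insertNth (α := fun _ => Bool) p s π.2 = Fin.insertNth p s' π'.2 :=
    congrArg Prod.snd h
  obtain ⟨rfl, hsign⟩ := Fin.insertNth_injective2 hsnd
  have hperm : π.1 = π'.1 := Equiv.ext fun j => Fin.castSucc_injective _ <| by
    simpa only [insertMax_fst_succAbove] using congrArg (fun σ => σ.1 (p.succAbove j)) h
  rw [Prod.ext hperm hsign]

lemma insertMax_bijective :
    Function.Bijective fun x : SignedPerm n × Fin (n + 1) × Bool => insertMax x.1 x.2.1 x.2.2 := by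
  refine (Fintype.bijective_iff_injective_and_card _).mpr ⟨insertMax_injective, ?_⟩
  simp [Fintype.card_perm, Nat.factorial_succ]
  ring

lemma desA_insertMax (π : SignedPerm n) (p : Fin (n + 1)) (s : Bool) :
    desA (insertMax π p s)
        + (if 1 ≤ (p : ℕ) ∧ (p : ℕ) < n ∧ bval π (p + 1) < bval π p then 1 else 0)
      = desA π + if s then (if 1 ≤ (p : ℕ) then 1 else 0) else (if (p : ℕ) < n then 1 else 0) := by
  change wordDes _ (n + 1) + _ = wordDes _ n + _
  have h := wordDes_insertAt (bval π) (topLetter n s) (Nat.lt_succ_iff.mp p.isLt)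
  have hp := abs_le.mp (abs_bval_le π p)
  have hp' := abs_le.mp (abs_bval_le π (p + 1))
  rw [bval_insertMax]
  cases s <;> simp only [topLetter] at h ⊢ <;> split_ifs at h ⊢ <;> omega

lemma desA_insertMax_bounds (π : SignedPerm n) (p : Fin (n + 1)) (s : Bool) :
    desA π ≤ desA (insertMax π p s) ∧ desA (insertMax π p s) ≤ desA π + 1 := by
  have h := desA_insertMax π p s
  split_ifs at h <;> omega

lemma sum_ite_descent_eq_desA (π : SignedPerm n) :
    ∑ p : Fin (n + 1), (if 1 ≤ (p : ℕ) ∧ (p : ℕ) < n ∧ bval π (p + 1) < bval π p then 1 else 0)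
      = desA π := by
  rw [Fin.sum_univ_eq_sum_range
      (fun p => if 1 ≤ p ∧ p < n ∧ bval π (p + 1) < bval π p then 1 else 0),
    Finset.sum_boole, Nat.cast_id, desA]
  congr 1
  ext p
  simp only [Finset.mem_filter, Finset.mem_range, Finset.mem_Icc]
  omega

lemma sum_ite_one_le_val : ∑ p : Fin (n + 1), (if 1 ≤ (p : ℕ) then 1 else 0) = n := by
  rw [Fin.sum_univ_succ]
  simp

lemma sum_ite_val_lt : ∑ p : Fin (n + 1), (if (p : ℕ) < n then 1 else 0) = n := by
  rw [Fin.sum_univ_castSucc]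
  simp

lemma sum_desA_insertMax (π : SignedPerm n) :
    ∑ x : Fin (n + 1) × Bool, desA (insertMax π x.1 x.2) + 2 * desA π
      = 2 * (n + 1) * desA π + 2 * n := by
  have hp : ∀ p : Fin (n + 1), ∑ s : Bool, desA (insertMax π p s)
      + 2 * (if 1 ≤ (p : ℕ) ∧ (p : ℕ) < n ∧ bval π (p + 1) < bval π p then 1 else 0)
      = 2 * desA π + ((if 1 ≤ (p : ℕ) then 1 else 0) + (if (p : ℕ) < n then 1 else 0)) := by
    intro p
    have htrue := desA_insertMax π p true
    have hfalse := desA_insertMax π p false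
    simp only [Fintype.sum_bool, if_true, Bool.false_eq_true, if_false] at htrue hfalse ⊢
    omega
  have hsum := Fintype.sum_congr _ _ hp
  simp only [Finset.sum_add_distrib, ← Finset.mul_sum, sum_ite_descent_eq_desA, sum_ite_one_le_val,
    sum_ite_val_lt, Finset.sum_const, Finset.card_univ, Fintype.card_fin, smul_eq_mul] at hsum
  rw [Fintype.sum_prod_type]
  linarith

lemma sum_desA_succ {M : Type*} [AddCommMonoid M] (F : ℕ → M) :
    ∑ π : SignedPerm (n + 1), F (desA π) =
      ∑ π : SignedPerm n,
        ((2 * desA π + 2) • F (desA π) + (2 * n - 2 * desA π) • F (desA π + 1)) := by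
  rw [← Fintype.sum_bijective _ insertMax_bijective
    (fun x => F (desA (insertMax x.1 x.2.1 x.2.2))) _ fun _ => rfl, Fintype.sum_prod_type]
  refine Fintype.sum_congr _ _ fun π => ?_
  have hsum := sum_desA_insertMax π
  rw [sum_comp_of_le_le_add_one F _ fun x : Fin (n + 1) × Bool => desA_insertMax_bounds π x.1 x.2]
  simp only [Fintype.card_prod, Fintype.card_fin, Fintype.card_bool]
  congr 2 <;> ring_nf at hsum ⊢ <;> omega

end Insertion

section Derivation

variable {R A : Type*} [CommSemiring R] [CommSemiring A] [Algebra R A] (D : Derivation R A A)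
  {y z : A}

lemma derivation_pow_mul_pow (hy : D y = y * z ^ 2) (hz : D z = y ^ 2 * z) (a b : ℕ) :
    D (y ^ a * z ^ b) = a • (y ^ a * z ^ (b + 2)) + b • (y ^ (a + 2) * z ^ b) := by
  rw [Derivation.leibniz, Derivation.leibniz_pow, Derivation.leibniz_pow, hy, hz]
  rcases a with _ | a <;> rcases b with _ | b <;> simp only [smul_eq_mul, nsmul_eq_mul] <;>
    push_cast <;> ring

lemma pow_toLinearMap_apply_sq (hy : D y = y * z ^ 2) (hz : D z = y ^ 2 * z) (n : ℕ) :
    (D.toLinearMap ^ n) (y ^ 2) =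
      ∑ π : SignedPerm n, y ^ (2 * desA π + 2) * z ^ (2 * n - 2 * desA π) := by
  induction n with
  | zero => simp [desA]
  | succ n ih =>
    rw [pow_succ', Module.End.mul_apply, ih, map_sum,
      sum_desA_succ fun d => y ^ (2 * d + 2) * z ^ (2 * (n + 1) - 2 * d)]
    refine Fintype.sum_congr _ _ fun π => ?_
    have hd := desA_le π
    rw [Derivation.coeFn_coe, derivation_pow_mul_pow D hy hz,
      show 2 * (n + 1) - 2 * desA π = 2 * n - 2 * desA π + 2 by omega,
      show 2 * (n + 1) - 2 * (desA π + 1) = 2 * n - 2 * desA π by omega,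
      show 2 * (desA π + 1) + 2 = 2 * desA π + 2 + 2 by ring]

end Derivation

open MvPolynomial in
theorem statement_1_general
    (D : Derivation ℚ (MvPolynomial (Fin 3) ℚ) (MvPolynomial (Fin 3) ℚ))
    (hy : D (X 1) = X 1 * X 2 ^ 2)
    (hz : D (X 2) = X 1 ^ 2 * X 2) (n : ℕ) :
    (D.toLinearMap ^ n) (X 1 ^ 2) =
      X 1 ^ 2 * ∑ π : SignedPerm n, X 1 ^ (2 * desA π) * X 2 ^ (2 * n - 2 * desA π) := by
  rw [pow_toLinearMap_apply_sq D hy hz, Finset.mul_sum]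
  exact Fintype.sum_congr _ _ fun π => by ring

open MvPolynomial in
theorem statement_1
    (D : Derivation ℚ (MvPolynomial (Fin 3) ℚ) (MvPolynomial (Fin 3) ℚ))
    (hx : D (X 0) = X 0 * X 1 * X 2)
    (hy : D (X 1) = X 1 * X 2 ^ 2)
    (hz : D (X 2) = X 1 ^ 2 * X 2) (n : ℕ) :
    (D.toLinearMap ^ n) (X 1 ^ 2) =
      X 1 ^ 2 * ∑ π : SignedPerm n, X 1 ^ (2 * desA π) * X 2 ^ (2 * n - 2 * desA π) :=
  statement_1_general D hy hz n
end

section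
/- Let D be the derivation of ℚ[x,y,z] with D(x)=xyz, D(y)=yz², D(z)=y²z. For every n ≥ 0, D^n(yz) = yz · Σ_{π ∈ B_n} y^{2·des_B(π)} z^{2n − 2·des_B(π)}, an identity in ℚ[x,y,z]. -/
/-! ### Auxiliary material -/

open Finset

lemma bval_eq_of_pos {n : ℕ} (π : SignedPerm n) (i : ℕ) (h1 : 1 ≤ i) (h2 : i ≤ n) :
    bval π i =
      if π.2 ⟨i - 1, by omega⟩ then -(((π.1 ⟨i - 1, by omega⟩ : ℕ) : ℤ) + 1)
        else ((π.1 ⟨i - 1, by omega⟩ : ℕ) : ℤ) + 1 := by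
  rw [bval, dif_pos ⟨h1, h2⟩]

lemma bval_le {n : ℕ} (π : SignedPerm n) (i : ℕ) : bval π i ≤ n := by
  rw [bval]
  split
  · rename_i h
    have hlt : ((π.1 ⟨i - 1, by omega⟩ : Fin n) : ℕ) < n := Fin.is_lt _
    split <;> omega
  · positivity

lemma neg_le_bval {n : ℕ} (π : SignedPerm n) (i : ℕ) : -(n : ℤ) ≤ bval π i := by
  rw [bval]
  split
  · rename_i h
    have hlt : ((π.1 ⟨i - 1, by omega⟩ : Fin n) : ℕ) < n := Fin.is_lt _
    split <;> omega
  · omega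

lemma desB_le {n : ℕ} (π : SignedPerm n) : desB π ≤ n :=
  le_trans (Finset.card_filter_le _ _) (by simp)

lemma desB_eq_sum {n : ℕ} (π : SignedPerm n) :
    desB π = ∑ i ∈ Finset.range n, (if bval π (i+1) < bval π i then 1 else 0) := by
  rw [desB, Finset.card_filter]

/-- Insertion of `±(n+1)` at word position `j+1` into a signed permutation of `B_n`. -/
def ins {n : ℕ} (x : SignedPerm n × Fin (n+1) × Bool) : SignedPerm (n+1) :=
  ⟨(finSuccEquiv' x.2.1).trans (x.1.1.optionCongr.trans (finSuccEquiv' (Fin.last n)).symm),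
    fun i => (finSuccEquiv' x.2.1 i).elim x.2.2 x.1.2⟩

lemma ins_perm_at {n : ℕ} (x : SignedPerm n × Fin (n+1) × Bool) :
    (ins x).1 x.2.1 = Fin.last n := by
  simp [ins, finSuccEquiv'_at, finSuccEquiv'_symm_none]

lemma ins_perm_succAbove {n : ℕ} (x : SignedPerm n × Fin (n+1) × Bool) (k : Fin n) :
    (ins x).1 (x.2.1.succAbove k) = (x.1.1 k).castSucc := by
  simp [ins, finSuccEquiv'_succAbove, finSuccEquiv'_symm_some, Fin.succAbove_last]

lemma ins_sign_at {n : ℕ} (x : SignedPerm n × Fin (n+1) × Bool) :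
    (ins x).2 x.2.1 = x.2.2 := by
  simp [ins, finSuccEquiv'_at]

lemma ins_sign_succAbove {n : ℕ} (x : SignedPerm n × Fin (n+1) × Bool) (k : Fin n) :
    (ins x).2 (x.2.1.succAbove k) = x.1.2 k := by
  simp [ins, finSuccEquiv'_succAbove]

lemma optionCongr_removeNone {α β : Type*} (e : Option α ≃ Option β) (h : e none = none) :
    (e.removeNone).optionCongr = e := by
  ext x
  cases x with
  | none => simp [h]
  | some a =>
    have hne : e (some a) ≠ none := by
      intro hc
      exact (Option.some_ne_none a) (e.injective (hc.trans h.symm))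
    obtain ⟨b, hb⟩ := Option.ne_none_iff_exists'.mp hne
    have := Equiv.removeNone_some e ⟨b, hb⟩
    simp [this]

/-- Deletion of `±(n+1)` from a signed permutation of `B_{n+1}`. -/
def rem {n : ℕ} (π : SignedPerm (n+1)) : SignedPerm n × Fin (n+1) × Bool :=
  ⟨⟨((finSuccEquiv' (π.1.symm (Fin.last n))).symm.trans
        (π.1.trans (finSuccEquiv' (Fin.last n)))).removeNone,
    fun k => π.2 ((π.1.symm (Fin.last n)).succAbove k)⟩,
   π.1.symm (Fin.last n), π.2 (π.1.symm (Fin.last n))⟩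

lemma rem_ins {n : ℕ} (x : SignedPerm n × Fin (n+1) × Bool) : rem (ins x) = x := by
  obtain ⟨⟨σ, ε⟩, j, s⟩ := x
  have hj : (ins (⟨σ, ε⟩, j, s)).1.symm (Fin.last n) = j := by
    rw [Equiv.symm_apply_eq]
    exact (ins_perm_at _).symm
  have hopt : ((finSuccEquiv' j).symm.trans
      ((ins (⟨σ, ε⟩, j, s)).1.trans (finSuccEquiv' (Fin.last n)))) = σ.optionCongr := by
    ext o
    simp [ins, Equiv.trans_apply]
  refine Prod.ext ?_ (Prod.ext ?_ ?_)
  · refine Prod.ext ?_ ?_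
    · show ((finSuccEquiv' ((ins (⟨σ, ε⟩, j, s)).1.symm (Fin.last n))).symm.trans
        ((ins (⟨σ, ε⟩, j, s)).1.trans (finSuccEquiv' (Fin.last n)))).removeNone = σ
      rw [hj, hopt, Equiv.removeNone_optionCongr]
    · show (fun k => (ins (⟨σ, ε⟩, j, s)).2
        (((ins (⟨σ, ε⟩, j, s)).1.symm (Fin.last n)).succAbove k)) = ε
      funext k
      rw [hj]
      exact ins_sign_succAbove _ k
  · exact hj
  · show (ins (⟨σ, ε⟩, j, s)).2 ((ins (⟨σ, ε⟩, j, s)).1.symm (Fin.last n)) = s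
    rw [hj]; exact ins_sign_at _

lemma ins_rem {n : ℕ} (π : SignedPerm (n+1)) : ins (rem π) = π := by
  set j := π.1.symm (Fin.last n) with hjdef
  have hj : π.1 j = Fin.last n := Equiv.apply_symm_apply _ _
  set e := (finSuccEquiv' j).symm.trans (π.1.trans (finSuccEquiv' (Fin.last n))) with hedef
  have henone : e none = none := by
    simp [hedef, Equiv.trans_apply, finSuccEquiv'_symm_none, hj, finSuccEquiv'_at]
  have hoc : (e.removeNone).optionCongr = e := optionCongr_removeNone e henone
  refine Prod.ext ?_ ?_
  · show (finSuccEquiv' j).trans ((e.removeNone).optionCongr.trans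
      (finSuccEquiv' (Fin.last n)).symm) = π.1
    rw [hoc]
    ext i
    simp [hedef, Equiv.trans_apply]
  · funext i
    show (finSuccEquiv' j i).elim (π.2 j) (fun k => π.2 (j.succAbove k)) = π.2 i
    rcases h : finSuccEquiv' j i with _ | k
    · have : i = j := by
        have := (finSuccEquiv' j).injective (h.trans (finSuccEquiv'_at j).symm)
        exact this
      rw [this]; rfl
    · have : i = j.succAbove k := by
        have := congrArg (finSuccEquiv' j).symm h
        rwa [Equiv.symm_apply_apply, finSuccEquiv'_symm_some] at this
      rw [this]; rfl

lemma ins_bijective {n : ℕ} :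
    Function.Bijective (ins : SignedPerm n × Fin (n+1) × Bool → SignedPerm (n+1)) :=
  Function.bijective_iff_has_inverse.mpr ⟨rem, rem_ins, ins_rem⟩

/-! ### `bval` of an insertion -/

lemma bval_ins_of_le {n : ℕ} (π : SignedPerm n) (j : Fin (n+1)) (s : Bool) (i : ℕ)
    (h : i ≤ (j : ℕ)) : bval (ins (π, j, s)) i = bval π i := by
  rcases Nat.eq_zero_or_pos i with h0 | h1
  · subst h0; rw [bval, bval, dif_neg (by omega), dif_neg (by omega)]
  have hjn : (j : ℕ) ≤ n := by omega
  have h2 : i ≤ n := le_trans h hjn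
  have him : i - 1 < n := by omega
  rw [bval_eq_of_pos _ i h1 (by omega), bval_eq_of_pos _ i h1 h2]
  have hidx : (⟨i - 1, by omega⟩ : Fin (n+1)) = j.succAbove ⟨i - 1, him⟩ := by
    rw [Fin.succAbove_of_castSucc_lt]
    · rfl
    · rw [Fin.lt_def]
      show i - 1 < (j : ℕ)
      omega
  rw [hidx, ins_perm_succAbove (⟨π, j, s⟩) ⟨i - 1, him⟩,
    ins_sign_succAbove (⟨π, j, s⟩) ⟨i - 1, him⟩]
  rfl

lemma bval_ins_mid {n : ℕ} (π : SignedPerm n) (j : Fin (n+1)) (s : Bool) :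
    bval (ins (π, j, s)) ((j : ℕ) + 1) = if s then -((n : ℤ) + 1) else (n : ℤ) + 1 := by
  have hjn : (j : ℕ) ≤ n := by omega
  rw [bval_eq_of_pos _ _ (by omega) (by omega)]
  have hidx : (⟨(j : ℕ) + 1 - 1, by omega⟩ : Fin (n+1)) = j := by
    apply Fin.ext; simp
  rw [hidx, ins_perm_at (⟨π, j, s⟩), ins_sign_at (⟨π, j, s⟩)]
  simp [Fin.last]

lemma bval_ins_of_gt {n : ℕ} (π : SignedPerm n) (j : Fin (n+1)) (s : Bool) (i : ℕ)
    (h1 : (j : ℕ) + 1 ≤ i) (h2 : i ≤ n) : bval (ins (π, j, s)) (i + 1) = bval π i := by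
  have hi1 : 1 ≤ i := by omega
  have him : i - 1 < n := by omega
  rw [bval_eq_of_pos _ (i+1) (by omega) (by omega), bval_eq_of_pos _ i hi1 h2]
  have hidx : (⟨i + 1 - 1, by omega⟩ : Fin (n+1)) = j.succAbove ⟨i - 1, him⟩ := by
    rw [Fin.succAbove_of_le_castSucc]
    · apply Fin.ext
      show i + 1 - 1 = (i - 1) + 1
      omega
    · rw [Fin.le_def]
      show (j : ℕ) ≤ i - 1
      omega
  rw [hidx, ins_perm_succAbove (⟨π, j, s⟩) ⟨i - 1, him⟩,
    ins_sign_succAbove (⟨π, j, s⟩) ⟨i - 1, him⟩]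
  rfl

/-- The increment of `desB` caused by inserting `±(n+1)` at gap `j`. -/
def inc {n : ℕ} (π : SignedPerm n) (j : Fin (n+1)) (s : Bool) : ℕ :=
  if (j : ℕ) < n then (if bval π ((j : ℕ)+1) < bval π (j : ℕ) then 0 else 1)
  else (if s then 1 else 0)

lemma desB_ins {n : ℕ} (π : SignedPerm n) (j : Fin (n+1)) (s : Bool) :
    desB (ins (π, j, s)) = desB π + inc π j s := by
  have hjn : (j : ℕ) ≤ n := by omega
  have habs : ∀ i : ℕ, bval π i < (n : ℤ) + 1 ∧ -((n : ℤ) + 1) < bval π i := by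
    intro i
    have := bval_le π i; have := neg_le_bval π i
    constructor <;> omega
  -- descent indicator at the gap just before the inserted letter
  have hdd_j : (if bval (ins (π, j, s)) ((j : ℕ) + 1) < bval (ins (π, j, s)) (j : ℕ) then (1:ℕ) else 0)
      = (if s then 1 else 0) := by
    rw [bval_ins_mid π j s, bval_ins_of_le π j s (j : ℕ) le_rfl]
    have := habs (j : ℕ)
    cases s <;> simp only [Bool.false_eq_true, reduceIte] <;> split <;> omega
  rw [desB_eq_sum, desB_eq_sum]
  rcases Nat.lt_or_ge (j : ℕ) n with hlt | hge
  · -- j < n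
    have hdd_j1 : (if bval (ins (π, j, s)) ((j : ℕ) + 2) < bval (ins (π, j, s)) ((j : ℕ) + 1) then (1:ℕ) else 0)
        = (if s then 0 else 1) := by
      have : bval (ins (π, j, s)) ((j : ℕ) + 1 + 1) = bval π ((j : ℕ) + 1) :=
        bval_ins_of_gt π j s ((j : ℕ) + 1) le_rfl hlt
      rw [show (j : ℕ) + 2 = (j : ℕ) + 1 + 1 from rfl, this, bval_ins_mid π j s]
      have := habs ((j : ℕ) + 1)
      cases s <;> simp only [Bool.false_eq_true, reduceIte] <;> split <;> omega
    -- split LHS sum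
    have hsplit : ∑ i ∈ Finset.range (n+1),
        (if bval (ins (π, j, s)) (i+1) < bval (ins (π, j, s)) i then (1:ℕ) else 0)
      = (∑ i ∈ Finset.range (j : ℕ),
          (if bval (ins (π, j, s)) (i+1) < bval (ins (π, j, s)) i then (1:ℕ) else 0))
        + ((if bval (ins (π, j, s)) ((j : ℕ)+1) < bval (ins (π, j, s)) (j : ℕ) then (1:ℕ) else 0)
        + ((if bval (ins (π, j, s)) ((j : ℕ)+2) < bval (ins (π, j, s)) ((j : ℕ)+1) then (1:ℕ) else 0)
        + ∑ i ∈ Finset.Ico ((j : ℕ)+2) (n+1),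
            (if bval (ins (π, j, s)) (i+1) < bval (ins (π, j, s)) i then (1:ℕ) else 0))) := by
      rw [Finset.range_eq_Ico,
        ← Finset.sum_Ico_consecutive _ (Nat.zero_le (j : ℕ)) (by omega : (j : ℕ) ≤ n + 1),
        ← Finset.sum_Ico_consecutive _ (by omega : (j : ℕ) ≤ (j : ℕ) + 1) (by omega : (j : ℕ) + 1 ≤ n + 1),
        ← Finset.sum_Ico_consecutive _ (by omega : (j : ℕ) + 1 ≤ (j : ℕ) + 2) (by omega : (j : ℕ) + 2 ≤ n + 1),
        Nat.Ico_succ_singleton, Finset.sum_singleton,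
        show (j : ℕ) + 2 = ((j : ℕ) + 1) + 1 from rfl, Nat.Ico_succ_singleton,
        Finset.sum_singleton, ← Finset.range_eq_Ico]
    rw [hsplit, hdd_j, hdd_j1]
    -- split RHS sum
    have hsplitR : ∑ i ∈ Finset.range n,
        (if bval π (i+1) < bval π i then (1:ℕ) else 0)
      = (∑ i ∈ Finset.range (j : ℕ), (if bval π (i+1) < bval π i then (1:ℕ) else 0))
        + ((if bval π ((j : ℕ)+1) < bval π (j : ℕ) then (1:ℕ) else 0)
        + ∑ i ∈ Finset.Ico ((j : ℕ)+1) n, (if bval π (i+1) < bval π i then (1:ℕ) else 0)) := by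
      rw [Finset.range_eq_Ico,
        ← Finset.sum_Ico_consecutive _ (Nat.zero_le (j : ℕ)) (by omega : (j : ℕ) ≤ n),
        ← Finset.sum_Ico_consecutive _ (by omega : (j : ℕ) ≤ (j : ℕ) + 1) (by omega : (j : ℕ) + 1 ≤ n),
        Nat.Ico_succ_singleton, Finset.sum_singleton, ← Finset.range_eq_Ico]
    rw [hsplitR]
    -- low part is unchanged
    have hlow : ∑ i ∈ Finset.range (j : ℕ),
        (if bval (ins (π, j, s)) (i+1) < bval (ins (π, j, s)) i then (1:ℕ) else 0)
      = ∑ i ∈ Finset.range (j : ℕ), (if bval π (i+1) < bval π i then (1:ℕ) else 0) := by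
      refine Finset.sum_congr rfl ?_
      intro i hi
      rw [Finset.mem_range] at hi
      rw [bval_ins_of_le π j s (i+1) (by omega), bval_ins_of_le π j s i (by omega)]
    -- high part is the shifted old part
    have hhigh : ∑ i ∈ Finset.Ico ((j : ℕ)+2) (n+1),
        (if bval (ins (π, j, s)) (i+1) < bval (ins (π, j, s)) i then (1:ℕ) else 0)
      = ∑ i ∈ Finset.Ico ((j : ℕ)+1) n, (if bval π (i+1) < bval π i then (1:ℕ) else 0) := by
      rw [Finset.sum_Ico_eq_sum_range, Finset.sum_Ico_eq_sum_range]
      have hn : n + 1 - ((j : ℕ) + 2) = n - ((j : ℕ) + 1) := by omega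
      rw [hn]
      refine Finset.sum_congr rfl ?_
      intro i hi
      rw [Finset.mem_range] at hi
      have e1 : bval (ins (π, j, s)) ((j : ℕ) + 2 + i + 1) = bval π ((j : ℕ) + 1 + i + 1) := by
        rw [show (j : ℕ) + 2 + i + 1 = ((j : ℕ) + 1 + i + 1) + 1 by omega]
        exact bval_ins_of_gt π j s _ (by omega) (by omega)
      have e2 : bval (ins (π, j, s)) ((j : ℕ) + 2 + i) = bval π ((j : ℕ) + 1 + i) := by
        rw [show (j : ℕ) + 2 + i = ((j : ℕ) + 1 + i) + 1 by omega]
        exact bval_ins_of_gt π j s _ (by omega) (by omega)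
      rw [e1, e2]
    rw [hlow, hhigh, inc, if_pos hlt]
    cases s with
    | false =>
      simp only [Bool.false_eq_true, reduceIte]
      by_cases hdesc : bval π ((j : ℕ)+1) < bval π (j : ℕ)
      · simp only [if_pos hdesc]; omega
      · simp only [if_neg hdesc]; omega
    | true =>
      simp only [Bool.false_eq_true, reduceIte]
      by_cases hdesc : bval π ((j : ℕ)+1) < bval π (j : ℕ)
      · simp only [if_pos hdesc]; omega
      · simp only [if_neg hdesc]; omega
  · -- j = n
    have hj' : (j : ℕ) = n := by omega
    rw [Finset.sum_range_succ]
    have hlow : ∑ i ∈ Finset.range n,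
        (if bval (ins (π, j, s)) (i+1) < bval (ins (π, j, s)) i then (1:ℕ) else 0)
      = ∑ i ∈ Finset.range n, (if bval π (i+1) < bval π i then (1:ℕ) else 0) := by
      refine Finset.sum_congr rfl ?_
      intro i hi
      rw [Finset.mem_range] at hi
      rw [bval_ins_of_le π j s (i+1) (by omega), bval_ins_of_le π j s i (by omega)]
    have hend : (if bval (ins (π, j, s)) (n+1) < bval (ins (π, j, s)) n then (1:ℕ) else 0)
        = (if s then 1 else 0) := by
      rw [hj'] at hdd_j
      exact hdd_j
    rw [hlow, hend, inc, if_neg (show ¬ ((j : ℕ) < n) by omega)]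

/-! ### Fiber sum -/

lemma fiber_sum {n : ℕ} {M : Type*} [CommSemiring M] (π : SignedPerm n) (F : ℕ → M) :
    ∑ j : Fin (n+1), ∑ s : Bool, F (inc π j s)
      = ((2 * desB π + 1 : ℕ) : M) * F 0 + ((2 * (n - desB π) + 1 : ℕ) : M) * F 1 := by
  rw [Fin.sum_univ_castSucc]
  have hlast : ∑ s : Bool, F (inc π (Fin.last n) s) = F 0 + F 1 := by
    rw [Fintype.sum_bool]
    rw [inc, inc]
    simp
    ring
  have hcast : ∀ k : Fin n, ∑ s : Bool, F (inc π k.castSucc s)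
      = (if bval π ((k : ℕ)+1) < bval π (k : ℕ) then F 0 + F 0 else F 1 + F 1) := by
    intro k
    rw [Fintype.sum_bool]
    have hv : ((k.castSucc : Fin (n+1)) : ℕ) = (k : ℕ) := rfl
    rw [inc, inc, hv, if_pos k.is_lt, if_pos k.is_lt]
    split <;> rfl
  rw [Finset.sum_congr rfl (fun k _ => hcast k)]
  rw [← Fin.sum_univ_eq_sum_range
    (fun i => if bval π (i+1) < bval π i then F 0 + F 0 else F 1 + F 1) n |>.symm]
  rw [Finset.sum_ite, Finset.sum_const, Finset.sum_const]
  have hc1 : ((Finset.range n).filter (fun i => bval π (i+1) < bval π i)).card = desB π := rfl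
  have hc2 : ((Finset.range n).filter (fun i => ¬ bval π (i+1) < bval π i)).card
      = n - desB π := by
    have := Finset.card_filter_add_card_filter_not
      (s := Finset.range n) (p := fun i => bval π (i+1) < bval π i)
    rw [Finset.card_range] at this
    rw [desB] at *
    omega
  rw [hc1, hc2, hlast, nsmul_eq_mul, nsmul_eq_mul]
  generalize (n - desB π) = m
  push_cast
  ring

/-! ### The derivation computation -/

open MvPolynomial

lemma keyD
    (D : Derivation ℚ (MvPolynomial (Fin 3) ℚ) (MvPolynomial (Fin 3) ℚ))
    (hy : D (X 1) = X 1 * X 2 ^ 2)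
    (hz : D (X 2) = X 1 ^ 2 * X 2) (d e : ℕ) :
    D (X 1 ^ (2*d+1) * X 2 ^ (2*e+1)) =
      ((2*d+1 : ℕ) : MvPolynomial (Fin 3) ℚ) * (X 1 ^ (2*d+1) * X 2 ^ (2*e+3))
      + ((2*e+1 : ℕ) : MvPolynomial (Fin 3) ℚ) * (X 1 ^ (2*d+3) * X 2 ^ (2*e+1)) := by
  rw [Derivation.leibniz, Derivation.leibniz_pow, Derivation.leibniz_pow, hy, hz]
  simp only [smul_eq_mul, nsmul_eq_mul]
  rw [show 2*d+1-1 = 2*d by omega, show 2*e+1-1 = 2*e by omega]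
  push_cast
  ring

open MvPolynomial in
theorem statement_2
    (D : Derivation ℚ (MvPolynomial (Fin 3) ℚ) (MvPolynomial (Fin 3) ℚ))
    (hx : D (X 0) = X 0 * X 1 * X 2)
    (hy : D (X 1) = X 1 * X 2 ^ 2)
    (hz : D (X 2) = X 1 ^ 2 * X 2) (n : ℕ) :
    (D.toLinearMap ^ n) (X 1 * X 2) =
      X 1 * X 2 * ∑ π : SignedPerm n, X 1 ^ (2 * desB π) * X 2 ^ (2 * n - 2 * desB π) := by
  induction n with
  | zero =>
    rw [pow_zero, Module.End.one_apply]
    have h1 : ∀ π : SignedPerm 0,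
        X 1 ^ (2 * desB π) * X 2 ^ (2 * 0 - 2 * desB π) = (1 : MvPolynomial (Fin 3) ℚ) := by
      intro π
      have : desB π = 0 := by simp [desB]
      rw [this]
      simp
    rw [Finset.sum_congr rfl (fun π _ => h1 π), Finset.sum_const, nsmul_eq_mul]
    simp
  | succ n ih =>
    rw [pow_succ', Module.End.mul_apply, ih]
    have hDcoe : (D.toLinearMap : MvPolynomial (Fin 3) ℚ → MvPolynomial (Fin 3) ℚ) = D := rfl
    rw [show D.toLinearMap (X 1 * X 2 * ∑ π : SignedPerm n,
        X 1 ^ (2 * desB π) * X 2 ^ (2 * n - 2 * desB π))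
      = D (X 1 * X 2 * ∑ π : SignedPerm n,
        X 1 ^ (2 * desB π) * X 2 ^ (2 * n - 2 * desB π)) from rfl]
    rw [Finset.mul_sum, map_sum]
    -- per-π identity
    have per : ∀ π : SignedPerm n,
        D (X 1 * X 2 * (X 1 ^ (2 * desB π) * X 2 ^ (2 * n - 2 * desB π)))
          = ∑ j : Fin (n+1), ∑ s : Bool,
              X 1 * X 2 * (X 1 ^ (2 * desB (ins (π, j, s)))
                * X 2 ^ (2 * (n+1) - 2 * desB (ins (π, j, s)))) := by
      intro π
      obtain ⟨e, he⟩ : ∃ e, n = desB π + e := ⟨n - desB π, by have := desB_le π; omega⟩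
      set d := desB π with hd
      clear_value d
      have hsum : ∀ j : Fin (n+1), ∀ s : Bool,
          X 1 * X 2 * (X 1 ^ (2 * desB (ins (π, j, s)))
            * X 2 ^ (2 * (n+1) - 2 * desB (ins (π, j, s))))
          = (fun k => (X 1 * X 2 * (X 1 ^ (2 * (d + k))
              * X 2 ^ (2 * (n+1) - 2 * (d + k))) : MvPolynomial (Fin 3) ℚ)) (inc π j s) := by
        intro j s
        rw [desB_ins, ← hd]
      rw [Finset.sum_congr rfl (fun j _ => Finset.sum_congr rfl (fun s _ => hsum j s))]
      rw [fiber_sum π (fun k => (X 1 * X 2 * (X 1 ^ (2 * (d + k))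
              * X 2 ^ (2 * (n+1) - 2 * (d + k))) : MvPolynomial (Fin 3) ℚ))]
      rw [← hd]
      have h0 : 2 * (n+1) - 2 * (d + 0) = 2*e+2 := by omega
      have h1 : 2 * (n+1) - 2 * (d + 1) = 2*e := by omega
      have h2 : 2 * n - 2 * d = 2 * e := by omega
      have h3 : n - d = e := by omega
      rw [h0, h1, h2, h3]
      rw [show (X 1 * X 2 * (X 1 ^ (2 * d) * X 2 ^ (2*e)) : MvPolynomial (Fin 3) ℚ)
          = X 1 ^ (2*d+1) * X 2 ^ (2*e+1) by ring]
      rw [keyD D hy hz d e]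
      push_cast
      ring
    rw [Finset.sum_congr rfl (fun π _ => per π)]
    -- reassemble via the insertion bijection
    have hbij : ∑ π : SignedPerm n, ∑ j : Fin (n+1), ∑ s : Bool,
        (X 1 * X 2 * (X 1 ^ (2 * desB (ins (π, j, s)))
          * X 2 ^ (2 * (n+1) - 2 * desB (ins (π, j, s)))) : MvPolynomial (Fin 3) ℚ)
      = ∑ π' : SignedPerm (n+1),
          X 1 * X 2 * (X 1 ^ (2 * desB π') * X 2 ^ (2 * (n+1) - 2 * desB π')) := by
      calc ∑ π : SignedPerm n, ∑ j : Fin (n+1), ∑ s : Bool,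
            (X 1 * X 2 * (X 1 ^ (2 * desB (ins (π, j, s)))
              * X 2 ^ (2 * (n+1) - 2 * desB (ins (π, j, s)))) : MvPolynomial (Fin 3) ℚ)
          = ∑ π : SignedPerm n, ∑ p : Fin (n+1) × Bool,
              (X 1 * X 2 * (X 1 ^ (2 * desB (ins (π, p.1, p.2)))
                * X 2 ^ (2 * (n+1) - 2 * desB (ins (π, p.1, p.2)))) : MvPolynomial (Fin 3) ℚ) :=
          Finset.sum_congr rfl (fun π _ =>
            (Fintype.sum_prod_type (f := fun p : Fin (n+1) × Bool =>
              (X 1 * X 2 * (X 1 ^ (2 * desB (ins (π, p.1, p.2)))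
                * X 2 ^ (2 * (n+1) - 2 * desB (ins (π, p.1, p.2)))) : MvPolynomial (Fin 3) ℚ))).symm)
        _ = ∑ x : SignedPerm n × (Fin (n+1) × Bool),
              (X 1 * X 2 * (X 1 ^ (2 * desB (ins (x.1, x.2.1, x.2.2)))
                * X 2 ^ (2 * (n+1) - 2 * desB (ins (x.1, x.2.1, x.2.2)))) : MvPolynomial (Fin 3) ℚ) :=
          (Fintype.sum_prod_type (f := fun x : SignedPerm n × (Fin (n+1) × Bool) =>
              (X 1 * X 2 * (X 1 ^ (2 * desB (ins (x.1, x.2.1, x.2.2)))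
                * X 2 ^ (2 * (n+1) - 2 * desB (ins (x.1, x.2.1, x.2.2)))) : MvPolynomial (Fin 3) ℚ))).symm
        _ = ∑ π' : SignedPerm (n+1),
              X 1 * X 2 * (X 1 ^ (2 * desB π') * X 2 ^ (2 * (n+1) - 2 * desB π')) :=
          Fintype.sum_bijective ins ins_bijective _ _ (fun x => rfl)
    rw [hbij, ← Finset.mul_sum]
end
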